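/- (Any action pair is supportable) In the game with two principals, two agents with two actions each, F_n ≡ 0 for both agents, and nonnegative gross payoffs, for every action pair s ∈ {U,D} × {L,R} the allocation (s, 0) in which every transfer equals zero is a truthful Λ-equilibrium allocation; in particular, any of the four possible action pairs can be supported as an equilibrium action pair of a truthful Λ-equilibrium. -/

import Mathlib

open scoped Classical
open Finset

noncomputable section

namespace CMGPTA

/-- A profile of transfer schedules of one principal: a nonnegative payment
schedule for each agent. -/
def Sched (N : Type*) (S : N → Type*) : Type _ := ∀ n : N, S n → NNReal

/-- A deviator-reporting mechanism (DRM) of a principal: no-deviation schedules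
together with punishment schedules, one for each potentially deviating principal. -/
def DRM (M N : Type*) (S : N → Type*) : Type _ := Sched N S × (M → Sched N S)

/-- Agents' communication strategies: a report in `M̄ = M ∪ {0}` (encoded as
`Option M`, with `none` standing for `0`) to each principal, given any profile of DRMs. -/
abbrev CommStrat (M N : Type*) (S : N → Type*) : Type _ :=
  ∀ _ : N, (M → DRM M N S) → M → Option M

/-- Agents' action strategies: an action given the profile of DRMs, the agent's own
reports, and the assigned transfer schedules. -/
abbrev ActStrat (M N : Type*) (S : N → Type*) : Type _ :=
  ∀ n : N, (M → DRM M N S) → (M → Option M) → (M → Sched N S) → S n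

variable {M N : Type*} [Fintype M] [Fintype N] [DecidableEq M] [DecidableEq N]
variable {S : N → Type*} [∀ n, Fintype (S n)] [∀ n, Nonempty (S n)]

/-- Number of agents sending report `v`. -/
def cnt (k : N → Option M) (v : Option M) : ℕ :=
  (Finset.univ.filter fun n => k n = v).card

/-- The transfer schedules assigned by principal `m`'s DRM given the agents' reports:
the punishment schedules against `j` if some `j ≠ m` is reported by strictly more than
`N/2` agents, the zero schedules if two distinct reports `≠ m` are each sent by exactly
`N/2` agents, and the no-deviation schedules otherwise. -/
def drmOut (m : M) (d : DRM M N S) (k : N → Option M) : Sched N S :=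
  if h : ∃ j : M, j ≠ m ∧ Fintype.card N < 2 * cnt k (some j) then d.2 h.choose
  else if ∃ v v' : Option M, v ≠ v' ∧ v ≠ some m ∧ v' ≠ some m ∧
      2 * cnt k v = Fintype.card N ∧ 2 * cnt k v' = Fintype.card N then
    fun _ _ => 0
  else d.1

/-- The schedules assigned to the agents given the DRMs and communication strategies. -/
def assigned (lam : M → DRM M N S) (x : CommStrat M N S) : M → Sched N S :=
  fun m => drmOut m (lam m) fun n => x n lam m

/-- The action profile induced by the strategies. -/
def act (lam : M → DRM M N S) (x : CommStrat M N S) (sig : ActStrat M N S) :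
    ∀ n, S n :=
  fun n => sig n lam (x n lam) (assigned lam x)

/-- Principal `m`'s net payoff. -/
def V (G : M → (∀ n, S n) → ℝ) (lam : M → DRM M N S) (x : CommStrat M N S)
    (sig : ActStrat M N S) (m : M) : ℝ :=
  G m (act lam x sig) - ∑ n, (assigned lam x m n (act lam x sig n) : ℝ)

/-- Condition 1: agents' actions are optimal given any assigned schedules. -/
def ActOpt (F : ∀ n : N, S n → ℝ) (sig : ActStrat M N S) : Prop :=
  ∀ (n : N) (lam : M → DRM M N S) (kn : M → Option M) (t : M → Sched N S) (s' : S n),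
    F n s' + ∑ m, (t m n s' : ℝ) ≤
      F n (sig n lam kn t) + ∑ m, (t m n (sig n lam kn t) : ℝ)

/-- Agent `n`'s continuation payoff when she unilaterally sends the reports `kn`
while the other agents follow `x`. -/
def agentPayoff (F : ∀ n : N, S n → ℝ) (sig : ActStrat M N S) (x : CommStrat M N S)
    (lam : M → DRM M N S) (n : N) (kn : M → Option M) : ℝ :=
  let t : M → Sched N S :=
    fun m => drmOut m (lam m) (Function.update (fun i => x i lam m) n (kn m));
  F n (sig n lam kn t) + ∑ m, (t m n (sig n lam kn t) : ℝ)

/-- Condition 2: each agent's report profile is a best response given the other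
agents' reports and the induced schedules and continuation actions. -/
def MsgOpt (F : ∀ n : N, S n → ℝ) (sig : ActStrat M N S) (x : CommStrat M N S) : Prop :=
  ∀ (n : N) (lam : M → DRM M N S) (kn : M → Option M),
    agentPayoff F sig x lam n kn ≤ agentPayoff F sig x lam n (x n lam)

/-- Condition 3: no principal gains by unilaterally replacing his DRM with any other DRM. -/
def PrinOpt (G : M → (∀ n, S n) → ℝ) (lam : M → DRM M N S) (x : CommStrat M N S)
    (sig : ActStrat M N S) : Prop :=
  ∀ (m : M) (d : DRM M N S), V G (Function.update lam m d) x sig m ≤ V G lam x sig m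

/-- Λ-equilibrium. -/
def LambdaEq (G : M → (∀ n, S n) → ℝ) (F : ∀ n : N, S n → ℝ) (lam : M → DRM M N S)
    (x : CommStrat M N S) (sig : ActStrat M N S) : Prop :=
  ActOpt F sig ∧ MsgOpt F sig x ∧ PrinOpt G lam x sig

/-- Truthful reporting: agents report `0` to every principal on the equilibrium path,
and all report `m` to every principal after a unilateral deviation by principal `m`. -/
def Truthful (lam : M → DRM M N S) (x : CommStrat M N S) : Prop :=
  (∀ (n : N) (k : M), x n lam k = none) ∧
  ∀ (m : M) (d : DRM M N S), d ≠ lam m →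
    ∀ (n : N) (k : M), x n (Function.update lam m d) k = some m

/-- The set `Ŝ(t)` of agents' jointly optimal action profiles given transfer schedules. -/
def Shat (F : ∀ n : N, S n → ℝ) (t : M → Sched N S) : Set (∀ n, S n) :=
  {s | ∀ (n : N) (s' : S n),
    F n s' + ∑ m, (t m n s' : ℝ) ≤ F n (s n) + ∑ m, (t m n (s n) : ℝ)}

/-- Principal `m`'s worst net payoff over agents' optimal action profiles. -/
def worst (G : M → (∀ n, S n) → ℝ) (F : ∀ n : N, S n → ℝ) (m : M)
    (t : M → Sched N S) : ℝ :=
  sInf ((fun s => G m s - ∑ n, (t m n (s n) : ℝ)) '' Shat F t)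

/-- The inner supremum over principal `m`'s own transfer schedules, the other
principals' schedules being fixed. -/
def innerSup (G : M → (∀ n, S n) → ℝ) (F : ∀ n : N, S n → ℝ) (m : M)
    (t : M → Sched N S) : ℝ :=
  sSup {v | ∃ tm : Sched N S, v = worst G F m (Function.update t m tm)}

/-- Principal `m`'s minmax value `V̲^m`. -/
def minmax (G : M → (∀ n, S n) → ℝ) (F : ∀ n : N, S n → ℝ) (m : M) : ℝ :=
  sInf {v | ∃ t : M → Sched N S, v = innerSup G F m t}

/-- Agent maximization: the allocation is supported by transfer schedules under which
the prescribed actions are optimal for the agents. -/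
def AM (F : ∀ n : N, S n → ℝ) (s : ∀ n, S n) (d : M → N → NNReal) : Prop :=
  ∃ t : M → Sched N S, s ∈ Shat F t ∧ ∀ m n, d m n = t m n (s n)

/-- Principal individual rationality. -/
def PIR (G : M → (∀ n, S n) → ℝ) (F : ∀ n : N, S n → ℝ) (s : ∀ n, S n)
    (d : M → N → NNReal) : Prop :=
  ∀ m : M, minmax G F m ≤ G m s - ∑ n, (d m n : ℝ)

section AnyPair

/-! ### Auxiliary constructions for the 2×2×2 case -/

abbrev S2 : Fin 2 → Type := fun _ => Fin 2

lemma fin2_or (p : Fin 2) : p = 0 ∨ p = 1 := by revert p; decide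

lemma fin2_sub_ne (p : Fin 2) : 1 - p ≠ p := by revert p; decide

lemma fin2_eq_of_ne (i a b : Fin 2) (ha : a ≠ i) (hb : b ≠ i) : a = b := by revert i a b; decide

lemma fin2_eq_or_sub (a b : Fin 2) : a = b ∨ a = 1 - b := by revert a b; decide

lemma fin2_sum (f : Fin 2 → ℝ) (m : Fin 2) : ∑ p : Fin 2, f p = f m + f (1 - m) := by
  rcases fin2_or m with rfl | rfl
  · have h : (1 : Fin 2) - 0 = 1 := rfl
    rw [Fin.sum_univ_two, h]
  · have h : (1 : Fin 2) - 1 = 0 := rfl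
    rw [Fin.sum_univ_two, h]
    ring

lemma cnt_exists (k : Fin 2 → Option (Fin 2)) (v : Option (Fin 2)) (h : 0 < cnt k v) :
    ∃ n, k n = v := by
  obtain ⟨n, hn⟩ := Finset.card_pos.mp h
  exact ⟨n, (Finset.mem_filter.mp hn).2⟩

lemma cnt_all (k : Fin 2 → Option (Fin 2)) (v : Option (Fin 2)) (h : 2 ≤ cnt k v) :
    ∀ n, k n = v := by
  intro n
  have hle : (Finset.univ.filter fun i => k i = v).card ≤ Fintype.card (Fin 2) :=
    Finset.card_filter_le _ _ |>.trans (by simp)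
  have hcard : (Finset.univ.filter fun i => k i = v).card = Fintype.card (Fin 2) := by
    unfold cnt at h; simp only [Fintype.card_fin] at *; omega
  have huniv := Finset.eq_univ_of_card _ hcard
  have hn : n ∈ Finset.univ.filter fun i => k i = v := by
    rw [huniv]; exact Finset.mem_univ n
  exact (Finset.mem_filter.mp hn).2

lemma cnt_const (v : Option (Fin 2)) : cnt (fun _ : Fin 2 => v) v = 2 := by
  unfold cnt; simp

/-- If some agent reports `m` to principal `m`, the no-deviation schedules obtain. -/
lemma drm_self (d : DRM (Fin 2) (Fin 2) S2) (m : Fin 2) (k : Fin 2 → Option (Fin 2))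
    (i : Fin 2) (hi : k i = some m) : drmOut m d k = d.1 := by
  unfold drmOut
  rw [dif_neg]
  refine if_neg ?_
  · rintro ⟨v, v', hvv', hv, hv', hcv, hcv'⟩
    simp only [Fintype.card_fin] at hcv hcv'
    obtain ⟨a, ha⟩ := cnt_exists k v (by omega)
    obtain ⟨b, hb⟩ := cnt_exists k v' (by omega)
    have hai : a ≠ i := fun h => hv (by rw [← ha, h, hi])
    have hbi : b ≠ i := fun h => hv' (by rw [← hb, h, hi])
    have : a = b := fin2_eq_of_ne i a b hai hbi
    exact hvv' (by rw [← ha, this, hb])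
  · rintro ⟨j, hj, hc⟩
    simp only [Fintype.card_fin] at hc
    have := cnt_all k (some j) (by omega) i
    rw [hi] at this
    exact hj (Option.some.inj this).symm

/-- If both agents report `j ≠ m` to principal `m`, the punishment schedules obtain. -/
lemma drm_both (d : DRM (Fin 2) (Fin 2) S2) (m j : Fin 2) (hj : j ≠ m)
    (k : Fin 2 → Option (Fin 2)) (hk : ∀ n, k n = some j) : drmOut m d k = d.2 j := by
  have hc : cnt k (some j) = 2 := by
    have : k = fun _ : Fin 2 => some j := funext hk
    rw [this]; exact cnt_const _
  have hex : ∃ j' : Fin 2, j' ≠ m ∧ Fintype.card (Fin 2) < 2 * cnt k (some j') :=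
    ⟨j, hj, by simp [hc]⟩
  unfold drmOut
  rw [dif_pos hex]
  obtain ⟨h1, h2⟩ := hex.choose_spec
  simp only [Fintype.card_fin] at h2
  obtain ⟨n, hn⟩ := cnt_exists k (some hex.choose) (by omega)
  rw [hk n] at hn
  rw [Option.some.inj hn]

/-- If both agents report `0`, the no-deviation schedules obtain. -/
lemma drm_none (d : DRM (Fin 2) (Fin 2) S2) (m : Fin 2) (k : Fin 2 → Option (Fin 2))
    (hk : ∀ n, k n = none) : drmOut m d k = d.1 := by
  unfold drmOut
  rw [dif_neg]
  refine if_neg ?_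
  · rintro ⟨v, v', hvv', hv, hv', hcv, hcv'⟩
    simp only [Fintype.card_fin] at hcv hcv'
    obtain ⟨a, ha⟩ := cnt_exists k v (by omega)
    obtain ⟨b, hb⟩ := cnt_exists k v' (by omega)
    rw [hk a] at ha; rw [hk b] at hb
    exact hvv' (by rw [← ha, hb])
  · rintro ⟨j, hj, hc⟩
    simp only [Fintype.card_fin] at hc
    obtain ⟨n, hn⟩ := cnt_exists k (some j) (by omega)
    rw [hk n] at hn
    cases hn

/-- The three possible outcomes of a DRM. -/
lemma drm_cases (m : Fin 2) (d : DRM (Fin 2) (Fin 2) S2) (k : Fin 2 → Option (Fin 2)) :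
    drmOut m d k = d.1 ∨ drmOut m d k = (fun _ _ => 0) ∨
      ∃ j, j ≠ m ∧ (∀ n, k n = some j) ∧ drmOut m d k = d.2 j := by
  unfold drmOut
  split_ifs with h1 h2
  · obtain ⟨hne, hc⟩ := h1.choose_spec
    simp only [Fintype.card_fin] at hc
    exact Or.inr (Or.inr ⟨h1.choose, hne, cnt_all k (some h1.choose)
      (by have hb : Fintype.card (Fin 2) = 2 := rfl; exact (by omega : 2 ≤ cnt k (some h1.choose))), rfl⟩)
  · exact Or.inr (Or.inl (if_pos h2))
  · exact Or.inl (if_neg h2)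

/-- A bound on all gross payoffs. -/
def Csum (G : Fin 2 → (∀ _ : Fin 2, Fin 2) → ℝ) : NNReal :=
  ∑ m : Fin 2, ∑ a : (∀ _ : Fin 2, Fin 2), (G m a).toNNReal

lemma le_Csum (G : Fin 2 → (∀ _ : Fin 2, Fin 2) → ℝ) (hG : ∀ m a, 0 ≤ G m a)
    (m : Fin 2) (a : ∀ _ : Fin 2, Fin 2) : G m a ≤ (Csum G : ℝ) := by
  have h1 : G m a = ((G m a).toNNReal : ℝ) := (Real.coe_toNNReal _ (hG m a)).symm
  rw [h1]
  have : (G m a).toNNReal ≤ Csum G := by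
    calc (G m a).toNNReal ≤ ∑ a' : (∀ _ : Fin 2, Fin 2), (G m a').toNNReal :=
          Finset.single_le_sum (f := fun a' => (G m a').toNNReal)
            (fun _ _ => zero_le) (Finset.mem_univ a)
      _ ≤ Csum G :=
          Finset.single_le_sum (f := fun m' => ∑ a' : (∀ _ : Fin 2, Fin 2), (G m' a').toNNReal)
            (fun _ _ => zero_le) (Finset.mem_univ m)
  exact_mod_cast this

/-- A minimizer of principal `m`'s gross payoff. -/
def sstar (G : Fin 2 → (∀ _ : Fin 2, Fin 2) → ℝ) (m : Fin 2) : ∀ _ : Fin 2, Fin 2 :=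
  (Finset.exists_min_image Finset.univ (G m) ⟨fun _ => 0, Finset.mem_univ _⟩).choose

lemma sstar_min (G : Fin 2 → (∀ _ : Fin 2, Fin 2) → ℝ) (m : Fin 2) (a : ∀ _ : Fin 2, Fin 2) :
    G m (sstar G m) ≤ G m a :=
  (Finset.exists_min_image Finset.univ (G m) ⟨fun _ => 0, Finset.mem_univ _⟩).choose_spec.2
    a (Finset.mem_univ a)

/-- The punishment schedule against principal `m`: a large payment, conditional on
playing the action profile that minimizes `G m`. -/
def punS (G : Fin 2 → (∀ _ : Fin 2, Fin 2) → ℝ) (m : Fin 2) : Sched (Fin 2) S2 :=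
  fun n a => if a = sstar G m n then Csum G else 0

/-- The equilibrium DRM profile. -/
def lamE (G : Fin 2 → (∀ _ : Fin 2, Fin 2) → ℝ) : Fin 2 → DRM (Fin 2) (Fin 2) S2 :=
  fun _ => ⟨fun _ _ => 0, fun j => punS G j⟩

/-- The equilibrium communication strategies. -/
def xE (G : Fin 2 → (∀ _ : Fin 2, Fin 2) → ℝ) : CommStrat (Fin 2) (Fin 2) S2 :=
  fun _ lam' =>
    if lam' = lamE G then fun _ => none
    else if lam' 1 = lamE G 1 then fun _ => some 0
    else if lam' 0 = lamE G 0 then fun _ => some 1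
    else fun m => some m

/-- The equilibrium action strategies: play `s n` whenever it maximizes total
transfers, otherwise play the unique maximizer. -/
def sigE (s : ∀ _ : Fin 2, Fin 2) : ActStrat (Fin 2) (Fin 2) S2 :=
  fun n _ _ t =>
    if ∀ a : Fin 2, (∑ m : Fin 2, (t m n a : ℝ)) ≤ ∑ m : Fin 2, (t m n (s n) : ℝ) then s n
    else 1 - s n

lemma sigE_max (s : ∀ _ : Fin 2, Fin 2) (n : Fin 2) (lam : Fin 2 → DRM (Fin 2) (Fin 2) S2)
    (kn : Fin 2 → Option (Fin 2)) (t : Fin 2 → Sched (Fin 2) S2) (a : Fin 2) :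
    (∑ m : Fin 2, (t m n a : ℝ)) ≤ ∑ m : Fin 2, (t m n (sigE s n lam kn t) : ℝ) := by
  unfold sigE
  split_ifs with h
  · exact h a
  · push_neg at h
    obtain ⟨a₀, ha₀⟩ := h
    have ha0 : a₀ = 1 - s n := by
      rcases fin2_eq_or_sub a₀ (s n) with h' | h'
      · rw [h'] at ha₀; exact absurd le_rfl (not_le.mpr ha₀)
      · exact h'
    rw [ha0] at ha₀
    rcases fin2_eq_or_sub a (s n) with h' | h'
    · rw [h']; exact le_of_lt ha₀
    · rw [h']

lemma actopt (s : ∀ _ : Fin 2, Fin 2) :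
    ActOpt (M := Fin 2) (fun (_ : Fin 2) (_ : Fin 2) => (0 : ℝ)) (sigE s) := by
  intro n lam kn t s'
  simpa using sigE_max s n lam kn t s'

/-- Key dominance lemma: a unilateral report deviation never increases any
assigned transfer, pointwise. -/
lemma sched_le (G : Fin 2 → (∀ _ : Fin 2, Fin 2) → ℝ)
    (lam' : Fin 2 → DRM (Fin 2) (Fin 2) S2) (n : Fin 2) (kn : Fin 2 → Option (Fin 2))
    (m : Fin 2) (i : Fin 2) (a : Fin 2) :
    drmOut m (lam' m) (Function.update (fun j => xE G j lam' m) n (kn m)) i a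
      ≤ drmOut m (lam' m) (fun j => xE G j lam' m) i a := by
  set k' : Fin 2 → Option (Fin 2) :=
    Function.update (fun j => xE G j lam' m) n (kn m) with hk'
  have hother : k' (1 - n) = xE G (1 - n) lam' m :=
    Function.update_of_ne (fin2_sub_ne n) _ _
  by_cases h1 : lam' = lamE G
  · have hx : ∀ j, xE G j lam' m = none := by
      intro j; simp [xE, h1]
    have heq : drmOut m (lam' m) (fun j => xE G j lam' m) = (lam' m).1 :=
      drm_none _ _ _ (fun j => hx j)
    have h1' : (lam' m).1 = fun _ _ => 0 := by rw [h1]; rfl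
    rw [heq, h1']
    rcases drm_cases m (lam' m) k' with hc | hc | ⟨j, hj, hall, hc⟩
    · rw [hc, h1']
    · rw [hc]
    · exfalso
      have := hall (1 - n)
      rw [hother, hx] at this
      cases this
  · by_cases h2 : lam' 1 = lamE G 1
    · have hx : ∀ j, xE G j lam' m = some 0 := by
        intro j
        show (if lam' = lamE G then (fun _ : Fin 2 => (none : Option (Fin 2)))
          else if lam' 1 = lamE G 1 then fun _ => some 0
          else if lam' 0 = lamE G 0 then fun _ => some 1
          else fun m => some m) m = some 0
        rw [if_neg h1, if_pos h2]
      rcases fin2_or m with rfl | rfl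
      · -- principal 0 : both reports are `some 0`, no-deviation schedules regardless
        have heq : drmOut 0 (lam' 0) (fun j => xE G j lam' 0) = (lam' 0).1 :=
          drm_self _ _ _ 0 (hx 0)
        have heq' : drmOut 0 (lam' 0) k' = (lam' 0).1 :=
          drm_self _ _ _ (1 - n) (by rw [hother, hx])
        rw [heq, heq']
      · -- principal 1 : equilibrium gives punishment schedule against 0
        have heq : drmOut 1 (lam' 1) (fun j => xE G j lam' 1) = (lam' 1).2 0 :=
          drm_both _ _ 0 (by decide) _ (fun j => hx j)
        rw [heq]
        rcases drm_cases 1 (lam' 1) k' with hc | hc | ⟨j, hj, hall, hc⟩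
        · rw [hc, h2]; exact zero_le
        · rw [hc]; exact zero_le
        · have hj0 : j = 0 := by
            have := hall (1 - n)
            rw [hother, hx] at this
            exact (Option.some.inj this).symm
          rw [hc, hj0]
    · by_cases h3 : lam' 0 = lamE G 0
      · have hx : ∀ j, xE G j lam' m = some 1 := by
          intro j
          show (if lam' = lamE G then (fun _ : Fin 2 => (none : Option (Fin 2)))
            else if lam' 1 = lamE G 1 then fun _ => some 0
            else if lam' 0 = lamE G 0 then fun _ => some 1
            else fun m => some m) m = some 1
          rw [if_neg h1, if_neg h2, if_pos h3]
        rcases fin2_or m with rfl | rfl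
        · have heq : drmOut 0 (lam' 0) (fun j => xE G j lam' 0) = (lam' 0).2 1 :=
            drm_both _ _ 1 (by decide) _ (fun j => hx j)
          rw [heq]
          rcases drm_cases 0 (lam' 0) k' with hc | hc | ⟨j, hj, hall, hc⟩
          · rw [hc, h3]; exact zero_le
          · rw [hc]; exact zero_le
          · have hj1 : j = 1 := by
              have := hall (1 - n)
              rw [hother, hx] at this
              exact (Option.some.inj this).symm
            rw [hc, hj1]
        · have heq : drmOut 1 (lam' 1) (fun j => xE G j lam' 1) = (lam' 1).1 :=
            drm_self _ _ _ 0 (hx 0)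
          have heq' : drmOut 1 (lam' 1) k' = (lam' 1).1 :=
            drm_self _ _ _ (1 - n) (by rw [hother, hx])
          rw [heq, heq']
      · have hx : ∀ j, xE G j lam' m = some m := by
          intro j
          show (if lam' = lamE G then (fun _ : Fin 2 => (none : Option (Fin 2)))
            else if lam' 1 = lamE G 1 then fun _ => some 0
            else if lam' 0 = lamE G 0 then fun _ => some 1
            else fun m => some m) m = some m
          rw [if_neg h1, if_neg h2, if_neg h3]
        have heq : drmOut m (lam' m) (fun j => xE G j lam' m) = (lam' m).1 :=
          drm_self _ _ _ 0 (hx 0)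
        have heq' : drmOut m (lam' m) k' = (lam' m).1 :=
          drm_self _ _ _ (1 - n) (by rw [hother, hx])
        rw [heq, heq']

end AnyPair

/-- **Any action pair is supportable.** In the 2-principal, 2-agent, 2-action game with
`F ≡ 0` and nonnegative gross payoffs, for every action pair `s` the allocation `(s, 0)`
with all transfers equal to zero is a truthful Λ-equilibrium allocation; in particular
any of the four action pairs can be supported in a truthful Λ-equilibrium. -/
theorem any_action_pair_supportable
    (G : Fin 2 → (∀ _ : Fin 2, Fin 2) → ℝ) (hG : ∀ m s, 0 ≤ G m s)
    (s : ∀ _ : Fin 2, Fin 2) :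
    ∃ (lam : Fin 2 → DRM (Fin 2) (Fin 2) fun _ => Fin 2)
      (x : CommStrat (Fin 2) (Fin 2) fun _ => Fin 2)
      (sig : ActStrat (Fin 2) (Fin 2) fun _ => Fin 2),
      LambdaEq G (fun _ _ => 0) lam x sig ∧ Truthful lam x ∧
      act lam x sig = s ∧ ∀ m n, assigned lam x m n (s n) = 0 := by
  have hassigned : ∀ (m i : Fin 2) (a : Fin 2), assigned (lamE G) (xE G) m i a = 0 := by
    intro m i a
    have heq : drmOut m (lamE G m) (fun j => xE G j (lamE G) m) = (lamE G m).1 :=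
      drm_none _ _ _ (fun j => by simp [xE])
    show drmOut m (lamE G m) (fun j => xE G j (lamE G) m) i a = 0
    rw [heq]
    rfl
  have hact : act (lamE G) (xE G) (sigE s) = s := by
    funext n
    show sigE s n (lamE G) (xE G n (lamE G)) (assigned (lamE G) (xE G)) = s n
    have hcond : ∀ a : Fin 2,
        (∑ m : Fin 2, ((assigned (lamE G) (xE G)) m n a : ℝ))
          ≤ ∑ m : Fin 2, ((assigned (lamE G) (xE G)) m n (s n) : ℝ) := by
      intro a; simp [hassigned]
    unfold sigE
    rw [if_pos hcond]
  have hVeq : ∀ m₀ : Fin 2, V G (lamE G) (xE G) (sigE s) m₀ = G m₀ s := by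
    intro m₀
    unfold V
    rw [hact]
    simp [hassigned]
  refine ⟨lamE G, xE G, sigE s, ⟨actopt s, ?_, ?_⟩, ⟨?_, ?_⟩, hact, fun m n => hassigned m n (s n)⟩
  · -- MsgOpt
    intro n lam' kn
    have hup : ∀ m : Fin 2, Function.update (fun i => xE G i lam' m) n (xE G n lam' m)
        = fun i => xE G i lam' m := fun m => Function.update_eq_self n _
    dsimp only [agentPayoff]
    simp only [hup, zero_add]
    refine le_trans (b := ∑ m : Fin 2,
        ((drmOut m (lam' m) (fun i => xE G i lam' m)) n
          (sigE s n lam' kn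
            (fun m => drmOut m (lam' m)
              (Function.update (fun i => xE G i lam' m) n (kn m)))) : ℝ)) ?_ ?_
    · exact Finset.sum_le_sum fun m _ => by exact_mod_cast sched_le G lam' n kn m n _
    · exact sigE_max s n lam' (xE G n lam') _ _
  · -- PrinOpt
    intro m d
    rw [hVeq m]
    by_cases hd : d = lamE G m
    · rw [hd, Function.update_eq_self]
      exact le_of_eq (hVeq m)
    · set lam'' := Function.update (lamE G) m d with hlam
      have hne : lam'' ≠ lamE G := by
        intro h
        apply hd
        have h2 := congrFun h m
        rw [hlam, Function.update_self] at h2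
        exact h2
      have hx : ∀ (i : Fin 2) (k : Fin 2), xE G i lam'' k = some m := by
        intro i k
        show (if lam'' = lamE G then (fun _ : Fin 2 => (none : Option (Fin 2)))
          else if lam'' 1 = lamE G 1 then fun _ => some 0
          else if lam'' 0 = lamE G 0 then fun _ => some 1
          else fun m => some m) k = some m
        rcases fin2_or m with rfl | rfl
        · have h2 : lam'' 1 = lamE G 1 := Function.update_of_ne (by decide) _ _
          rw [if_neg hne, if_pos h2]
        · have h2 : ¬(lam'' 1 = lamE G 1) := by
            rw [hlam, Function.update_self]; exact hd
          have h3 : lam'' 0 = lamE G 0 := Function.update_of_ne (by decide) _ _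
          rw [if_neg hne, if_neg h2, if_pos h3]
      have hlm : lam'' m = d := by rw [hlam, Function.update_self]
      have hAm : assigned lam'' (xE G) m = d.1 := by
        show drmOut m (lam'' m) (fun i => xE G i lam'' m) = d.1
        rw [drm_self (lam'' m) m _ 0 (hx 0 m), hlm]
      have hAp : ∀ p : Fin 2, p ≠ m → assigned lam'' (xE G) p = punS G m := by
        intro p hp
        show drmOut p (lam'' p) (fun i => xE G i lam'' p) = punS G m
        rw [drm_both (lam'' p) p m (Ne.symm hp) _ (fun i => hx i p)]
        have hlp : lam'' p = lamE G p := Function.update_of_ne hp _ _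
        rw [hlp]
        rfl
      have hmax : ∀ (i : Fin 2) (a' : Fin 2),
          (∑ p : Fin 2, ((assigned lam'' (xE G)) p i a' : ℝ))
            ≤ ∑ p : Fin 2, ((assigned lam'' (xE G)) p i
                (act lam'' (xE G) (sigE s) i) : ℝ) := by
        intro i a'
        exact sigE_max s i lam'' (xE G i lam'') (assigned lam'' (xE G)) a'
      show G m (act lam'' (xE G) (sigE s))
          - ∑ i : Fin 2, ((assigned lam'' (xE G) m i (act lam'' (xE G) (sigE s) i) : ℝ))
        ≤ G m s
      set a'' := act lam'' (xE G) (sigE s) with ha''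
      rw [hAm]
      by_cases hall : ∀ i : Fin 2, a'' i = sstar G m i
      · have he : a'' = sstar G m := funext hall
        have h0 : (0:ℝ) ≤ ∑ i : Fin 2, (d.1 i (a'' i) : ℝ) :=
          Finset.sum_nonneg fun _ _ => NNReal.coe_nonneg _
        calc G m a'' - ∑ i : Fin 2, (d.1 i (a'' i) : ℝ) ≤ G m a'' := sub_le_self _ h0
          _ = G m (sstar G m) := by rw [he]
          _ ≤ G m s := sstar_min G m s
      · push_neg at hall
        obtain ⟨n₀, hn₀⟩ := hall
        have hkey : (Csum G : ℝ) ≤ (d.1 n₀ (a'' n₀) : ℝ) := by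
          have h := hmax n₀ (sstar G m n₀)
          rw [fin2_sum (fun p => ((assigned lam'' (xE G)) p n₀ (sstar G m n₀) : ℝ)) m,
              fin2_sum (fun p => ((assigned lam'' (xE G)) p n₀ (a'' n₀) : ℝ)) m] at h
          rw [hAm, hAp (1 - m) (fin2_sub_ne m)] at h
          have hp1 : ((punS G m n₀ (sstar G m n₀)) : ℝ) = Csum G := by simp [punS]
          have hp2 : ((punS G m n₀ (a'' n₀)) : ℝ) = 0 := by simp [punS, hn₀]
          rw [hp1, hp2] at h
          have h0 : (0:ℝ) ≤ (d.1 n₀ (sstar G m n₀) : ℝ) := NNReal.coe_nonneg _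
          linarith
        have hsum : (d.1 n₀ (a'' n₀) : ℝ) ≤ ∑ i : Fin 2, (d.1 i (a'' i) : ℝ) :=
          Finset.single_le_sum (f := fun i => ((d.1 i (a'' i) : ℝ)))
            (fun _ _ => NNReal.coe_nonneg _) (Finset.mem_univ n₀)
        have hB : G m a'' ≤ (Csum G : ℝ) := le_Csum G hG m a''
        have hGs : (0:ℝ) ≤ G m s := hG m s
        linarith
  · -- Truthful, on path
    intro n k
    simp [xE]
  · -- Truthful, off path
    intro m d hd n k
    have hne : Function.update (lamE G) m d ≠ lamE G := fun h => hd (by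
      have := congrFun h m; rwa [Function.update_self] at this)
    show (if Function.update (lamE G) m d = lamE G then (fun _ : Fin 2 => (none : Option (Fin 2)))
      else if Function.update (lamE G) m d 1 = lamE G 1 then fun _ => some 0
      else if Function.update (lamE G) m d 0 = lamE G 0 then fun _ => some 1
      else fun m => some m) k = some m
    rcases fin2_or m with rfl | rfl
    · have h2 : Function.update (lamE G) 0 d 1 = lamE G 1 := Function.update_of_ne (by decide) _ _
      rw [if_neg hne, if_pos h2]
    · have h2 : ¬(Function.update (lamE G) 1 d 1 = lamE G 1) := by
        rw [Function.update_self]; exact hd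
      have h3 : Function.update (lamE G) 1 d 0 = lamE G 0 := Function.update_of_ne (by decide) _ _
      rw [if_neg hne, if_neg h2, if_pos h3]

end CMGPTA

end
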